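/- Let R ∈ ℕ with R ≥ 2, and let p_c ∈ ℝ with 1/R ≤ p_c ≤ 1/4. Set w = 2·p_c·R and let U = {x ∈ Bool^R : |x| ≤ w}, where |x| denotes the Hamming weight (number of true coordinates) of x. Let q be the product Bernoulli(p_c) distribution on Bool^R, q(x) = p_c^{|x|}·(1 − p_c)^{R−|x|}. Let δ ∈ ℝ satisfy 2·exp(−p_c·R/3) < δ ≤ 1, set N = (R : ℝ)^w (real power), and define q_δ on Option (Bool^R) by: q_δ(some x) = (δ/N)·⌊q(x)·N/δ⌋ for x ∈ U, q_δ(some x) = 0 for x ∉ U, and q_δ(none) = 1 − ∑_{x ∈ U} q_δ(some x). Then q_δ is a probability distribution (all values are in [0,1] and it sums to 1), it assigns zero mass to every string of Hamming weight greater than w, and the statistical distance between q_δ and the distribution q (extended to Option (Bool^R) by assigning mass 0 to none) is at most 2δ. -/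

import Mathlib

open Finset

/-- Hamming weight of a Boolean string of length `R`. -/
def hamWt {R : ℕ} (x : Fin R → Bool) : ℕ :=
  (Finset.univ.filter fun i => x i = true).card

/-- The product Bernoulli(`pc`) density on `Bool^R`. -/
noncomputable def qBer (R : ℕ) (pc : ℝ) (x : Fin R → Bool) : ℝ :=
  pc ^ hamWt x * (1 - pc) ^ (R - hamWt x)

/-- The discretized distribution `q_δ` on `Option (Bool^R)`:
on strings of Hamming weight at most `w = 2·pc·R` it takes the value
`(δ/N)·⌊q(x)·N/δ⌋` where `N = R^w` (real power), it vanishes on heavier strings,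
and the leftover mass is assigned to the fail symbol `none`. -/
noncomputable def qDisc (R : ℕ) (pc δ : ℝ) : Option (Fin R → Bool) → ℝ
  | some x =>
      if (hamWt x : ℝ) ≤ 2 * pc * R then
        (δ / (R : ℝ) ^ (2 * pc * (R : ℝ))) *
          ⌊qBer R pc x * (R : ℝ) ^ (2 * pc * (R : ℝ)) / δ⌋
      else 0
  | none =>
      1 - ∑ x : Fin R → Bool,
        (if (hamWt x : ℝ) ≤ 2 * pc * R then
          (δ / (R : ℝ) ^ (2 * pc * (R : ℝ))) *
            ⌊qBer R pc x * (R : ℝ) ^ (2 * pc * (R : ℝ)) / δ⌋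
        else 0)

/-- The Bernoulli density extended to `Option (Bool^R)` by giving mass `0` to `none`. -/
noncomputable def qExt (R : ℕ) (pc : ℝ) : Option (Fin R → Bool) → ℝ
  | some x => qBer R pc x
  | none => 0

/-- Statistical (total variation) distance between two distributions. -/
noncomputable def statDist {α : Type*} [Fintype α] (p q : α → ℝ) : ℝ :=
  (∑ a, |p a - q a|) / 2

/-!
Rounding `q` down to a multiple of `ε = δ / N` on the Hamming ball `U` and moving the lost mass
to `none` gives a distribution whose statistical distance from `q` is exactly the lost mass.
Rounding loses less than `ε` per point and `|U| ≤ R ^ ⌊w⌋ ≤ N`, so the ball contributes at most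
`δ`; outside the ball `q` has mass at most `(1 + pc) ^ R / 2 ^ w ≤ exp (-pc R / 3) < δ / 2`,
by Markov's inequality for `2 ^ |x|`.
-/

def boolFunEquivFinset (α : Type*) [Fintype α] [DecidableEq α] : (α → Bool) ≃ Finset α where
  toFun x := univ.filter fun i => x i = true
  invFun S i := decide (i ∈ S)
  left_inv x := by funext i; simp
  right_inv S := by ext i; simp

lemma sum_apply_hamWt {M : Type*} [AddCommMonoid M] (R : ℕ) (f : ℕ → M) :
    ∑ x : Fin R → Bool, f (hamWt x) = ∑ k ∈ range (R + 1), R.choose k • f k :=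
  calc ∑ x : Fin R → Bool, f (hamWt x) = ∑ S : Finset (Fin R), f #S :=
        (boolFunEquivFinset (Fin R)).sum_comp fun S => f #S
    _ = ∑ k ∈ range (R + 1), R.choose k • f k := by
        rw [← powerset_univ, sum_powerset_apply_card, card_univ, Fintype.card_fin]

lemma card_hamWt_le_le_sum_choose (R m : ℕ) :
    #{x : Fin R → Bool | hamWt x ≤ m} ≤ ∑ k ∈ range (m + 1), R.choose k :=
  calc #{x : Fin R → Bool | hamWt x ≤ m}
      = ∑ x : Fin R → Bool, if hamWt x ≤ m then 1 else 0 := card_filter _ _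
    _ = ∑ k ∈ range (R + 1), R.choose k • if k ≤ m then 1 else 0 :=
        sum_apply_hamWt R fun k => if k ≤ m then 1 else 0
    _ = ∑ k ∈ range (R + 1) with k ≤ m, R.choose k := by simp [sum_filter]
    _ ≤ ∑ k ∈ range (m + 1), R.choose k :=
        sum_le_sum_of_subset fun k hk => by simp only [mem_filter, mem_range] at hk ⊢; omega

lemma sum_range_choose_le_pow {R m : ℕ} (hR : 2 ≤ R) (hm : 2 ≤ m) :
    ∑ k ∈ range (m + 1), R.choose k ≤ R ^ m := by
  induction m, hm using Nat.le_induction with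
  | base =>
    obtain ⟨r, rfl⟩ : ∃ r, R = r + 2 := ⟨R - 2, by omega⟩
    have := Nat.div_mul_le_self ((r + 2) * (r + 1)) 2
    simp only [sum_range_succ, range_one, sum_singleton, Nat.choose_zero_right,
      Nat.choose_one_right, Nat.choose_two_right, Nat.add_one_sub_one, ge_iff_le]
    nlinarith
  | succ m hm ih =>
    have hchoose : 2 * R.choose (m + 1) ≤ R ^ (m + 1) :=
      calc 2 * R.choose (m + 1) ≤ (m + 1).factorial * R.choose (m + 1) :=
            Nat.mul_le_mul_right _ ((by omega : 2 ≤ m + 1).trans (Nat.self_le_factorial _))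
        _ = R.descFactorial (m + 1) := (Nat.descFactorial_eq_factorial_mul_choose _ _).symm
        _ ≤ R ^ (m + 1) := Nat.descFactorial_le_pow _ _
    have hpow : 2 * R ^ m ≤ R ^ (m + 1) := by
      rw [pow_succ']; exact Nat.mul_le_mul_right _ hR
    rw [sum_range_succ]
    omega

noncomputable def hammingBall (R : ℕ) (t : ℝ) : Finset (Fin R → Bool) := {x | (hamWt x : ℝ) ≤ t}

lemma card_hammingBall_le {R : ℕ} {t : ℝ} (hR : 2 ≤ R) (ht : 2 ≤ t) :
    (#(hammingBall R t) : ℝ) ≤ (R : ℝ) ^ t := by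
  have ht0 : 0 ≤ t := by linarith
  have hball : hammingBall R t = ({x | hamWt x ≤ ⌊t⌋₊} : Finset (Fin R → Bool)) := by
    ext x; simp [hammingBall, Nat.le_floor_iff ht0]
  have hm : 2 ≤ ⌊t⌋₊ := Nat.le_floor (by exact_mod_cast ht)
  calc (#(hammingBall R t) : ℝ) ≤ ((R ^ ⌊t⌋₊ : ℕ) : ℝ) := by
        rw [hball]
        exact_mod_cast (card_hamWt_le_le_sum_choose R _).trans (sum_range_choose_le_pow hR hm)
    _ = (R : ℝ) ^ (⌊t⌋₊ : ℝ) := by rw [Nat.cast_pow, Real.rpow_natCast]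
    _ ≤ (R : ℝ) ^ t :=
        Real.rpow_le_rpow_of_exponent_le (by exact_mod_cast (by omega : 1 ≤ R)) (Nat.floor_le ht0)

section Bernoulli

variable {R : ℕ} {pc : ℝ}

lemma qBer_nonneg (h0 : 0 ≤ pc) (h1 : pc ≤ 1) (x : Fin R → Bool) : 0 ≤ qBer R pc x := by
  have : 0 ≤ 1 - pc := by linarith
  unfold qBer
  positivity

lemma sum_qBer_mul_pow (c : ℝ) :
    ∑ x : Fin R → Bool, qBer R pc x * c ^ hamWt x = (pc * c + (1 - pc)) ^ R := by
  have hterm : ∀ x : Fin R → Bool, qBer R pc x * c ^ hamWt x =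
      (fun k => (pc * c) ^ k * (1 - pc) ^ (R - k)) (hamWt x) := by
    intro x; simp only [qBer, mul_pow]; ring
  rw [sum_congr rfl fun x _ => hterm x,
    sum_apply_hamWt R fun k => (pc * c) ^ k * (1 - pc) ^ (R - k), add_pow]
  refine sum_congr rfl fun k _ => ?_
  rw [nsmul_eq_mul]
  ring

lemma sum_qBer : ∑ x : Fin R → Bool, qBer R pc x = 1 := by
  simpa using sum_qBer_mul_pow (R := R) (pc := pc) 1

lemma rpow_mul_sum_qBer_compl_hammingBall_le (h0 : 0 ≤ pc) (h1 : pc ≤ 1) {c : ℝ} (hc : 1 ≤ c)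
    (t : ℝ) : c ^ t * ∑ x ∈ (hammingBall R t)ᶜ, qBer R pc x ≤ (pc * c + (1 - pc)) ^ R := by
  rw [← sum_qBer_mul_pow, mul_sum]
  calc ∑ x ∈ (hammingBall R t)ᶜ, c ^ t * qBer R pc x
      ≤ ∑ x ∈ (hammingBall R t)ᶜ, qBer R pc x * c ^ hamWt x := by
        refine sum_le_sum fun x hx => ?_
        have ht : t ≤ hamWt x := (not_le.1 (by simpa [hammingBall] using hx)).le
        rw [mul_comm, ← Real.rpow_natCast]
        exact mul_le_mul_of_nonneg_left (Real.rpow_le_rpow_of_exponent_le hc ht)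
          (qBer_nonneg h0 h1 x)
    _ ≤ ∑ x, qBer R pc x * c ^ hamWt x :=
        sum_le_univ_sum_of_nonneg fun x => mul_nonneg (qBer_nonneg h0 h1 x) (by positivity)

lemma sum_qBer_compl_hammingBall_le_exp (h0 : 0 ≤ pc) (h1 : pc ≤ 1) :
    ∑ x ∈ (hammingBall R (2 * pc * R))ᶜ, qBer R pc x ≤ Real.exp (-(pc * R) / 3) := by
  have hmgf := rpow_mul_sum_qBer_compl_hammingBall_le (R := R) h0 h1 one_le_two (2 * pc * R)
  have hbase : (pc * 2 + (1 - pc)) ^ R ≤ Real.exp (pc * R) :=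
    calc (pc * 2 + (1 - pc)) ^ R = (pc + 1) ^ R := by ring
      _ ≤ Real.exp pc ^ R := pow_le_pow_left₀ (by linarith) (Real.add_one_le_exp pc) R
      _ = Real.exp (pc * R) := by rw [← Real.exp_nat_mul, mul_comm]
  -- `2 ^ (2 pc R) = exp (2 log 2 · pc R)` and `2 log 2 > 4 / 3`
  have hexp : Real.exp (pc * R) ≤ (2 : ℝ) ^ (2 * pc * R) * Real.exp (-(pc * R) / 3) := by
    rw [Real.rpow_def_of_pos two_pos, ← Real.exp_add, Real.exp_le_exp]
    nlinarith [Real.log_two_gt_d9, mul_nonneg h0 (Nat.cast_nonneg R)]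
  exact le_of_mul_le_mul_left (hmgf.trans (hbase.trans hexp)) (by positivity)

end Bernoulli

section Discretization

variable {R : ℕ} {pc δ : ℝ}

lemma qDisc_some (x : Fin R → Bool) :
    qDisc R pc δ (some x) = if x ∈ hammingBall R (2 * pc * R) then
      ⌊qBer R pc x / (δ / (R : ℝ) ^ (2 * pc * R))⌋ * (δ / (R : ℝ) ^ (2 * pc * R)) else 0 := by
  simp only [qDisc, hammingBall, mem_filter, mem_univ, true_and, div_div_eq_mul_div]
  split_ifs <;> ring

lemma qDisc_some_nonneg (hδ : 0 ≤ δ) (h0 : 0 ≤ pc) (h1 : pc ≤ 1) (x : Fin R → Bool) :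
    0 ≤ qDisc R pc δ (some x) := by
  rw [qDisc_some]
  split_ifs
  · have := qBer_nonneg h0 h1 x
    positivity
  · exact le_rfl

lemma qDisc_some_le_qBer (hR : 0 < R) (hδ : 0 < δ) (h0 : 0 ≤ pc) (h1 : pc ≤ 1)
    (x : Fin R → Bool) : qDisc R pc δ (some x) ≤ qBer R pc x := by
  have : (0 : ℝ) < R := by exact_mod_cast hR
  rw [qDisc_some]
  split_ifs
  · exact sub_nonneg.1 (Int.sub_floor_div_mul_nonneg _ (by positivity))
  · exact qBer_nonneg h0 h1 x

lemma sum_qBer_sub_qDisc_le (hR : 0 < R) (hδ : 0 < δ) :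
    ∑ x, (qBer R pc x - qDisc R pc δ (some x)) ≤
      #(hammingBall R (2 * pc * R)) * (δ / (R : ℝ) ^ (2 * pc * R)) +
        ∑ x ∈ (hammingBall R (2 * pc * R))ᶜ, qBer R pc x := by
  have : (0 : ℝ) < R := by exact_mod_cast hR
  rw [← sum_add_sum_compl (hammingBall R (2 * pc * R)), ← nsmul_eq_mul, ← sum_const]
  gcongr with x hx x hx
  · rw [qDisc_some, if_pos hx]
    exact (Int.sub_floor_div_mul_lt _ (by positivity)).le
  · rw [qDisc_some, if_neg (mem_compl.1 hx), sub_zero]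

end Discretization

section OptionDeficit

variable {α : Type*} [Fintype α] {P Q : Option α → ℝ}

lemma sum_option_eq_one_of_none_eq (hP : P none = 1 - ∑ a, P (some a)) : ∑ o, P o = 1 := by
  rw [Fintype.sum_option, hP]
  ring

lemma nonneg_and_le_one_of_none_eq (hP : P none = 1 - ∑ a, P (some a))
    (hP0 : ∀ a, 0 ≤ P (some a)) (hPQ : ∀ a, P (some a) ≤ Q (some a)) (hQ0 : ∀ a, 0 ≤ Q (some a))
    (hQ : ∑ a, Q (some a) = 1) (o : Option α) : 0 ≤ P o ∧ P o ≤ 1 := by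
  cases o with
  | none =>
    have hle : ∑ a, P (some a) ≤ 1 := hQ ▸ sum_le_sum fun a _ => hPQ a
    have hnonneg : 0 ≤ ∑ a, P (some a) := sum_nonneg fun a _ => hP0 a
    rw [hP]
    constructor <;> linarith
  | some a => exact ⟨hP0 a, (hPQ a).trans (hQ ▸ single_le_sum (fun b _ => hQ0 b) (mem_univ a))⟩

lemma statDist_eq_sum_sub_of_none_eq (hP : P none = 1 - ∑ a, P (some a)) (hQn : Q none = 0)
    (hQ : ∑ a, Q (some a) = 1) (hPQ : ∀ a, P (some a) ≤ Q (some a)) :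
    statDist P Q = ∑ a, (Q (some a) - P (some a)) := by
  have hnone : P none - Q none = ∑ a, (Q (some a) - P (some a)) := by
    rw [hP, hQn, sum_sub_distrib, hQ]
    ring
  have hsome : ∀ a, |P (some a) - Q (some a)| = Q (some a) - P (some a) := fun a => by
    rw [abs_sub_comm, abs_of_nonneg (sub_nonneg.2 (hPQ a))]
  rw [statDist, Fintype.sum_option, hnone,
    abs_of_nonneg (sum_nonneg fun a _ => sub_nonneg.2 (hPQ a))]
  simp only [hsome]
  ring

end OptionDeficit

theorem qDisc_prob_and_close_general (R : ℕ) (hR : 2 ≤ R) (pc : ℝ)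
    (hpc1 : 1 / (R : ℝ) ≤ pc) (hpc2 : pc ≤ 1 / 4)
    (δ : ℝ) (hδl : 2 * Real.exp (-(pc * R) / 3) < δ) :
    (∀ o : Option (Fin R → Bool), 0 ≤ qDisc R pc δ o ∧ qDisc R pc δ o ≤ 1) ∧
    (∑ o : Option (Fin R → Bool), qDisc R pc δ o = 1) ∧
    (∀ x : Fin R → Bool, 2 * pc * R < (hamWt x : ℝ) → qDisc R pc δ (some x) = 0) ∧
    statDist (qDisc R pc δ) (qExt R pc) ≤ 2 * δ := by
  have hR0 : 0 < R := by omega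
  have hR_pos : (0 : ℝ) < R := by exact_mod_cast hR0
  have hpc0 : 0 ≤ pc := le_trans (by positivity) hpc1
  have hpc_le_one : pc ≤ 1 := by linarith
  have hδ : 0 < δ := lt_of_le_of_lt (by positivity) hδl
  have hw : 2 ≤ 2 * pc * R := by
    rw [div_le_iff₀ hR_pos] at hpc1
    linarith
  have hq : ∑ x, qExt R pc (some x) = 1 := sum_qBer
  have hle := qDisc_some_le_qBer hR0 hδ hpc0 hpc_le_one
  refine ⟨nonneg_and_le_one_of_none_eq rfl (qDisc_some_nonneg hδ.le hpc0 hpc_le_one) hle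
      (qBer_nonneg hpc0 hpc_le_one) hq, sum_option_eq_one_of_none_eq rfl, fun x hx => ?_, ?_⟩
  · rw [qDisc_some, if_neg]
    simpa [hammingBall] using hx
  · rw [statDist_eq_sum_sub_of_none_eq rfl rfl hq hle]
    calc ∑ x, (qBer R pc x - qDisc R pc δ (some x))
        ≤ #(hammingBall R (2 * pc * R)) * (δ / (R : ℝ) ^ (2 * pc * R)) +
            ∑ x ∈ (hammingBall R (2 * pc * R))ᶜ, qBer R pc x := sum_qBer_sub_qDisc_le hR0 hδ
      _ ≤ (R : ℝ) ^ (2 * pc * R) * (δ / (R : ℝ) ^ (2 * pc * R)) + Real.exp (-(pc * R) / 3) := by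
          gcongr
          · exact card_hammingBall_le hR hw
          · exact sum_qBer_compl_hammingBall_le_exp hpc0 hpc_le_one
      _ ≤ 2 * δ := by
          rw [mul_div_cancel₀ _ (by positivity)]
          linarith

/-- Provided `δ > 2·exp(-pc·R/3)`, the discretization `q_δ` is a probability
distribution supported on strings of Hamming weight at most `2·pc·R` (plus the
fail symbol), and is within statistical distance `2δ` of the Bernoulli product
distribution `q`. -/
theorem qDisc_prob_and_close (R : ℕ) (hR : 2 ≤ R) (pc : ℝ)
    (hpc1 : 1 / (R : ℝ) ≤ pc) (hpc2 : pc ≤ 1 / 4)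
    (δ : ℝ) (hδl : 2 * Real.exp (-(pc * R) / 3) < δ) (hδu : δ ≤ 1) :
    (∀ o : Option (Fin R → Bool), 0 ≤ qDisc R pc δ o ∧ qDisc R pc δ o ≤ 1) ∧
    (∑ o : Option (Fin R → Bool), qDisc R pc δ o = 1) ∧
    (∀ x : Fin R → Bool, 2 * pc * R < (hamWt x : ℝ) → qDisc R pc δ (some x) = 0) ∧
    statDist (qDisc R pc δ) (qExt R pc) ≤ 2 * δ :=
  qDisc_prob_and_close_general R hR pc hpc1 hpc2 δ hδl
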